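/- arXiv:1910.02174 — 2 statements merged into one kernel-verified Lean document; each statement's English description precedes it below -/
import Mathlib

section
/- Let C be an extension-closed pseudovariety of finite groups and let A, B be residually-C groups with B ∈ C (in particular B finite). Then the restricted wreath product A ≀ B is residually-C. -/
open Function SemidirectProduct

def restrictedBase (A B : Type*) [Group A] [Group B] : Subgroup (B → A) where
  carrier := {f | (mulSupport f).Finite}
  one_mem' := by simp
  mul_mem' := fun {f g} hf hg => (hf.union hg).subset (mulSupport_mul f g)
  inv_mem' := fun {f} hf => by simpa using hf

lemma shift_finite (A B : Type*) [Group A] [Group B] (b : B) {f : B → A}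
    (hf : (mulSupport f).Finite) : (mulSupport fun x => f (b⁻¹ * x)).Finite := by
  apply (hf.image (fun x => b * x)).subset
  intro x hx
  exact ⟨b⁻¹ * x, hx, by simp⟩

def wreathAut (A B : Type*) [Group A] [Group B] (b : B) : MulAut (restrictedBase A B) where
  toFun f := ⟨fun x => (f : B → A) (b⁻¹ * x), shift_finite A B b f.2⟩
  invFun f := ⟨fun x => (f : B → A) (b * x), by
    have h := shift_finite A B b⁻¹ f.2; simp only [inv_inv] at h; exact h⟩
  left_inv f := Subtype.ext (funext fun x => by simp)
  right_inv f := Subtype.ext (funext fun x => by simp)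
  map_mul' f g := rfl

def wreathHom (A B : Type*) [Group A] [Group B] : B →* MulAut (restrictedBase A B) where
  toFun := wreathAut A B
  map_one' := by
    ext f x
    simp [wreathAut]
  map_mul' b c := by
    ext f x
    simp [wreathAut, mul_assoc]

abbrev Wreath (A B : Type*) [Group A] [Group B] :=
  restrictedBase A B ⋊[wreathHom A B] B

structure Pseudovariety (C : (G : Type) → [_inst : Group G] → Prop) : Prop where
  finite : ∀ (G : Type) [Group G], C G → Finite G
  iso_closed : ∀ (G H : Type) [Group G] [Group H], (G ≃* H) → C G → C H
  subgroup_closed : ∀ (G : Type) [Group G], C G → ∀ H : Subgroup G, C H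
  prod_closed : ∀ (G H : Type) [Group G] [Group H], C G → C H → C (G × H)
  quot_closed : ∀ (G : Type) [Group G] (N : Subgroup G) [N.Normal], C G → C (G ⧸ N)
  ext_closed : ∀ (G : Type) [Group G] (N : Subgroup G) [N.Normal], C N → C (G ⧸ N) → C G

def ResiduallyC (C : (G : Type) → [_inst : Group G] → Prop) (G : Type*) [Group G] : Prop :=
  ∀ g : G, g ≠ 1 → ∃ (Q : Type) (_ : Group Q) (φ : G →* Q),
    C Q ∧ Function.Surjective φ ∧ φ g ≠ 1

def CSeparable (C : (G : Type) → [_inst : Group G] → Prop) {G : Type*} [Group G]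
    (X : Set G) : Prop :=
  ∀ g : G, g ∉ X → ∃ (Q : Type) (_ : Group Q) (φ : G →* Q),
    C Q ∧ Function.Surjective φ ∧ ∀ x ∈ X, φ g ≠ φ x

def COpen (C : (G : Type) → [_inst : Group G] → Prop) {G : Type} [Group G]
    (H : Subgroup G) : Prop :=
  ∃ N : Subgroup G, ∃ _ : N.Normal, N ≤ H ∧ C (G ⧸ N)

noncomputable def depthC (C : (G : Type) → [_inst : Group G] → Prop)
    (G : Type) [Group G] (X : Set G) (h : G) : ℕ :=
  sInf {n : ℕ | ∃ N : Subgroup G, ∃ _ : N.Normal, C (G ⧸ N) ∧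
    (∀ x ∈ X, (QuotientGroup.mk h : G ⧸ N) ≠ QuotientGroup.mk x) ∧ N.index = n}

def CConjSep (C : (G : Type) → [_inst : Group G] → Prop) (G : Type*) [Group G] : Prop :=
  ∀ g : G, CSeparable C {x : G | ∃ w : G, w * g * w⁻¹ = x}

/-! An element of `A ≀ B` with nontrivial `B`-coordinate is detected by the projection onto `B`.
Otherwise some coordinate `a` of its base part is nontrivial; a quotient `φ : A → Q` in `C` not
killing `a` induces `A ≀ B → Q ≀ B`, and `Q ≀ B` lies in `C` as an extension of `Q ^ B` by `B`. -/

def MulEquiv.piOptionEquivProd (ι Q : Type*) [Group Q] : (Option ι → Q) ≃* Q × (ι → Q) :=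
  { Equiv.piOptionEquivProd (β := fun _ => Q) with map_mul' := fun _ _ => rfl }

namespace Pseudovariety

variable {C : (G : Type) → [_inst : Group G] → Prop}

theorem mem_of_subsingleton (hC : Pseudovariety C) {G : Type} [Group G] (hG : C G)
    (Q : Type) [Group Q] [Subsingleton Q] : C Q :=
  have : Unique Q := uniqueOfSubsingleton 1
  hC.iso_closed _ _ MulEquiv.ofUnique (hC.subgroup_closed G hG ⊥)

theorem pi_mem (hC : Pseudovariety C) (ι : Type) [Finite ι] {Q : Type} [Group Q] (hQ : C Q) :
    C (ι → Q) := by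
  refine Finite.induction_empty_option (P := fun ι => C (ι → Q)) ?_ ?_ ?_ ι
  · intro α β e h
    exact hC.iso_closed _ _ (MulEquiv.arrowCongr e (MulEquiv.refl Q)) h
  · exact hC.mem_of_subsingleton hQ _
  · intro α _ ih
    exact hC.iso_closed _ _ (MulEquiv.piOptionEquivProd α Q).symm (hC.prod_closed _ _ hQ ih)

theorem wreath_mem (hC : Pseudovariety C) {Q B : Type} [Group Q] [Group B] (hQ : C Q)
    (hB : C B) : C (Wreath Q B) := by
  have : Finite B := hC.finite B hB
  have hbase : C (restrictedBase Q B) := hC.subgroup_closed _ (hC.pi_mem B hQ) _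
  refine hC.ext_closed _ (rightHom : Wreath Q B →* B).ker ?_ ?_
  · have e : restrictedBase Q B ≃* (rightHom : Wreath Q B →* B).ker :=
      (MonoidHom.ofInjective inl_injective).trans
        (MulEquiv.subgroupCongr range_inl_eq_ker_rightHom)
    exact hC.iso_closed _ _ e hbase
  · exact hC.iso_closed _ _
      (QuotientGroup.quotientKerEquivOfSurjective _ rightHom_surjective).symm hB

end Pseudovariety

namespace restrictedBase

variable {A Q : Type*} (B : Type*) [Group A] [Group Q] [Group B]

def map (φ : A →* Q) : restrictedBase A B →* restrictedBase Q B where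
  toFun f := ⟨fun x => φ ((f : B → A) x),
    f.2.subset (mulSupport_comp_subset φ.map_one (f : B → A))⟩
  map_one' := by ext; simp
  map_mul' f g := by ext; simp

theorem map_surjective {φ : A →* Q} (hφ : Surjective φ) : Surjective (map B φ) := by
  classical
  -- a pointwise section of `φ` must send `1` to `1` to keep supports finite
  let lift : Q → A := fun q => if q = 1 then 1 else surjInv hφ q
  have hlift : ∀ q, φ (lift q) = q := fun q => by
    by_cases hq : q = 1 <;> simp [lift, hq, surjInv_eq hφ]
  have hlift_one : lift 1 = 1 := if_pos rfl
  intro f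
  have hfin : (mulSupport fun x => lift ((f : B → Q) x)).Finite :=
    f.2.subset (mulSupport_comp_subset hlift_one (f : B → Q))
  refine ⟨⟨_, hfin⟩, ?_⟩
  ext x
  exact hlift _

end restrictedBase

namespace Wreath

variable {A Q : Type*} (B : Type*) [Group A] [Group Q] [Group B]

def map (φ : A →* Q) : Wreath A B →* Wreath Q B :=
  SemidirectProduct.map (restrictedBase.map B φ) (MonoidHom.id B) fun _ => rfl

theorem map_surjective {φ : A →* Q} (hφ : Surjective φ) : Surjective (map B φ) := by
  rintro ⟨f, b⟩
  obtain ⟨f', rfl⟩ := restrictedBase.map_surjective B hφ f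
  exact ⟨⟨f', b⟩, rfl⟩

theorem map_left_apply (φ : A →* Q) (g : Wreath A B) (x : B) :
    ((map B φ g).left : B → Q) x = φ ((g.left : B → A) x) := rfl

end Wreath

theorem stmt6_general (C : (G : Type) → [_inst : Group G] → Prop) (hC : Pseudovariety C)
    (A : Type*) (B : Type) [Group A] [Group B]
    (hA : ResiduallyC C A) (hBC : C B) :
    ResiduallyC C (Wreath A B) := by
  intro g hg
  by_cases hb : g.right = 1
  · obtain ⟨x, hx⟩ : ∃ x, (g.left : B → A) x ≠ 1 := by
      by_contra! h
      exact hg (SemidirectProduct.ext (Subtype.ext (funext h)) hb)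
    obtain ⟨Q, _, φ, hQ, hφ, hφx⟩ := hA _ hx
    refine ⟨Wreath Q B, inferInstance, Wreath.map B φ, hC.wreath_mem hQ hBC,
      Wreath.map_surjective B hφ, fun h => hφx ?_⟩
    rw [← Wreath.map_left_apply, h]
    rfl
  · exact ⟨B, inferInstance, rightHom, hBC, rightHom_surjective, hb⟩

/-- If `A`, `B` are residually-`C` and `B ∈ C` (hence finite), then the
restricted wreath product `A ≀ B` is residually-`C`. -/
theorem stmt6 (C : (G : Type) → [_inst : Group G] → Prop) (hC : Pseudovariety C)
    (A : Type*) (B : Type) [Group A] [Group B]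
    (hA : ResiduallyC C A) (hB : ResiduallyC C B) (hBC : C B) :
    ResiduallyC C (Wreath A B) :=
  stmt6_general C hC A B hA hBC
end

section
/- Let A be an abelian group, B a group, b ∈ B, and f ∈ ⊕_B A with support {s₁,…,s_k}. Then there exists f' ∈ ⊕_B A such that f'b is conjugate to fb by an element of the base group ⊕_B A, and the elements of supp(f') lie in pairwise distinct right cosets of ⟨b⟩ in B. -/
open Function SemidirectProduct

/-! Conjugating `f b` by `h` in the base group multiplies `f` by `h / b • h`; as `A` is abelian,
these coboundaries form a subgroup. The telescoping product `∏_{j < k} δ_{b ^ j y} a` shows that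
moving the value `a` from `b ^ k y` to `y` is a coboundary. So whenever two points of the support
lie in the same right coset of `⟨b⟩`, the value at one can be moved onto the other, which shrinks
the support; induct on its size. -/

namespace restrictedBase

variable {A B : Type*} [Group B]

def mulSingle [Group A] [DecidableEq B] (y : B) (a : A) : restrictedBase A B :=
  ⟨Pi.mulSingle y a, (Set.finite_singleton y).subset Pi.mulSupport_mulSingle_subset⟩

lemma wreathHom_mulSingle [Group A] [DecidableEq B] (b y : B) (a : A) :
    wreathHom A B b (mulSingle y a) = mulSingle (b * y) a := by
  ext z
  change (Pi.mulSingle y a : B → A) (b⁻¹ * z) = (Pi.mulSingle (b * y) a : B → A) z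
  simp only [Pi.mulSingle_apply, inv_mul_eq_iff_eq_mul]

variable [CommGroup A]

def coboundaries (b : B) : Subgroup (restrictedBase A B) :=
  (MonoidHom.id (restrictedBase A B) / (wreathHom A B b).toMonoidHom).range

lemma mem_coboundaries {b : B} {d : restrictedBase A B} :
    d ∈ coboundaries b ↔ ∃ h, h / wreathHom A B b h = d :=
  Iff.rfl

lemma mulSingle_div_mulSingle_mem_coboundaries [DecidableEq B] (b y : B) (a : A) (k : ℕ) :
    mulSingle y a / mulSingle (b ^ k * y) a ∈ coboundaries b := by
  refine mem_coboundaries.2 ⟨∏ j ∈ Finset.range k, mulSingle (b ^ j * y) a, ?_⟩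
  simp only [map_prod, wreathHom_mulSingle, ← Finset.prod_div_distrib, ← mul_assoc, ← pow_succ']
  simpa using Finset.prod_range_div' (fun j => mulSingle (b ^ j * y) a) k

end restrictedBase

lemma mulSupport_mul_mulSingle_div_mulSingle_subset {A B : Type*} [Group A] [DecidableEq B]
    {f : B → A} {x y : B} (hxy : x ≠ y) (hy : y ∈ mulSupport f) :
    mulSupport (f * (Pi.mulSingle y (f x) / Pi.mulSingle x (f x))) ⊆ mulSupport f \ {x} := by
  intro z hz
  by_cases hzx : z = x
  · subst hzx
    simp [Pi.mulSingle_eq_of_ne hxy] at hz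
  by_cases hzy : z = y
  · exact ⟨hzy ▸ hy, hzx⟩
  · simp_all [Pi.mulSingle_eq_of_ne]

def SupportInDistinctCosets {A B : Type*} [Group A] [Group B] (b : B) (f : restrictedBase A B) :
    Prop :=
  ∀ x ∈ mulSupport (f : B → A), ∀ y ∈ mulSupport (f : B → A), (∃ i : ℤ, x = b ^ i * y) → x = y

lemma exists_pow_mul_eq_or_of_exists_zpow_mul_eq {B : Type*} [Group B] {b x y : B}
    (h : ∃ i : ℤ, x = b ^ i * y) : ∃ k : ℕ, x = b ^ k * y ∨ y = b ^ k * x := by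
  obtain ⟨i, rfl⟩ := h
  obtain ⟨k, rfl | rfl⟩ := Int.eq_nat_or_neg i
  · exact ⟨k, .inl (by simp)⟩
  · exact ⟨k, .inr (by simp [← mul_assoc])⟩

section Cosets

open restrictedBase

variable {A B : Type*} [CommGroup A] [Group B] {b : B} {f : restrictedBase A B}

lemma exists_coboundary_ncard_mulSupport_lt_of_eq_pow_mul [DecidableEq B] {x y : B}
    (hx : x ∈ mulSupport (f : B → A)) (hy : y ∈ mulSupport (f : B → A)) (hne : x ≠ y) {k : ℕ}
    (hk : x = b ^ k * y) :
    ∃ d ∈ coboundaries b,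
      (mulSupport ((f * d : restrictedBase A B) : B → A)).ncard <
        (mulSupport (f : B → A)).ncard := by
  refine ⟨mulSingle y ((f : B → A) x) / mulSingle x ((f : B → A) x),
    hk ▸ mulSingle_div_mulSingle_mem_coboundaries .., Set.ncard_lt_ncard ?_ f.2⟩
  exact (mulSupport_mul_mulSingle_div_mulSingle_subset hne hy).trans_ssubset
    (Set.sdiff_singleton_ssubset.2 hx)

lemma exists_coboundary_ncard_mulSupport_lt [DecidableEq B] (hf : ¬ SupportInDistinctCosets b f) :
    ∃ d ∈ coboundaries b,
      (mulSupport ((f * d : restrictedBase A B) : B → A)).ncard <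
        (mulSupport (f : B → A)).ncard := by
  simp only [SupportInDistinctCosets, not_forall] at hf
  obtain ⟨x, hx, y, hy, hxy, hne⟩ := hf
  obtain ⟨k, hk | hk⟩ := exists_pow_mul_eq_or_of_exists_zpow_mul_eq hxy
  exacts [exists_coboundary_ncard_mulSupport_lt_of_eq_pow_mul hx hy hne hk,
    exists_coboundary_ncard_mulSupport_lt_of_eq_pow_mul hy hx (Ne.symm hne) hk]

lemma exists_coboundary_supportInDistinctCosets (b : B) (f : restrictedBase A B) :
    ∃ d ∈ coboundaries b, SupportInDistinctCosets b (f * d) := by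
  classical
  by_cases hf : SupportInDistinctCosets b f
  · exact ⟨1, one_mem _, by rwa [mul_one]⟩
  obtain ⟨d, hd, hlt⟩ := exists_coboundary_ncard_mulSupport_lt hf
  obtain ⟨d', hd', hgood⟩ := exists_coboundary_supportInDistinctCosets b (f * d)
  exact ⟨d * d', mul_mem hd hd', by rwa [← mul_assoc]⟩
termination_by (mulSupport (f : B → A)).ncard

end Cosets

lemma SemidirectProduct.inl_mul_inl_mul_inr_mul_inl_inv {N G : Type*} [Group N] [Group G]
    {φ : G →* MulAut N} (h f : N) (g : G) :
    (inl h : N ⋊[φ] G) * (inl f * inr g) * (inl h)⁻¹ = inl (h * f * φ g h⁻¹) * inr g := by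
  ext <;> simp

/-- `A` abelian. For any `f` in the base group and `b ∈ B` there is `f'`
in the base group such that `f'b` is conjugate to `fb` by a base-group element, and the
support of `f'` meets each right coset of `⟨b⟩` at most once. -/
theorem stmt11 (A B : Type*) [CommGroup A] [Group B] (b : B) (f : restrictedBase A B) :
    ∃ f' : restrictedBase A B,
      (∃ h : restrictedBase A B,
          (SemidirectProduct.inl h : Wreath A B) *
              (SemidirectProduct.inl f * SemidirectProduct.inr b) *
              (SemidirectProduct.inl h : Wreath A B)⁻¹
            = SemidirectProduct.inl f' * SemidirectProduct.inr b) ∧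
      ∀ x ∈ Function.mulSupport (f' : B → A), ∀ y ∈ Function.mulSupport (f' : B → A),
        (∃ i : ℤ, x = b ^ i * y) → x = y := by
  obtain ⟨d, hd, hgood⟩ := exists_coboundary_supportInDistinctCosets b f
  obtain ⟨h, rfl⟩ := restrictedBase.mem_coboundaries.1 hd
  refine ⟨_, ⟨h, ?_⟩, hgood⟩
  rw [inl_mul_inl_mul_inr_mul_inl_inv, map_inv, div_eq_mul_inv, ← mul_assoc, mul_comm f h]
end
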